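/- Let n ≥ 2, let δ ∈ (0, 1) be a constant, and set ζ = (1 − δ)/(4e). Consider the UMDA with parameters μ and λ optimizing LeadingOnes on {0,1}^n, where μ ≥ 4·((1 − δ)/δ²)·ln n and λ ≥ μ/ζ, and let d = ⌊log_4(ζ λ/μ)⌋. Consider an iteration t such that position i ∈ [n] is critical and such that p_j^(t) ≥ 1/4 for all positions j ≥ i. Then, with probability at least 1 − 1/n², for all positions j ∈ [min{n, i + d}], we have p_j^(t+1) = 1 − 1/n. -/

import Mathlib

/-!
Formalization of the UMDA (univariate marginal distribution algorithm) with parameters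
`μ ≤ lam` maximizing a fitness function `f : (Fin n → Bool) → ℝ`.

The algorithm is modeled as a deterministic function of driving randomness: in each
iteration `t`, the fresh randomness `step t` consists of `lam · n` independent uniform
random numbers in `[0,1]` (the population is sampled from the current frequency vector
by thresholding these uniforms, so that each bit is `1` with probability equal to the
corresponding frequency, independently) together with an independent uniformly random
permutation of `Fin lam` that is used to break ties in the selection of the `μ` best
individuals uniformly at random.  The randomness of different iterations is independent.

Positions: we index positions by `Fin n` (0-based), so `i : Fin n` represents the
(1-based) position `i + 1 ∈ [n]` of the paper.
-/

open MeasureTheory ProbabilityTheory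
open scoped ENNReal

noncomputable section

namespace UMDA

/-- The number of leading ones of a bit string `x : Fin n → Bool`,
`LO(x) = ∑_{i=1}^n ∏_{j=1}^i x_j`. -/
def leadingOnes {n : ℕ} (x : Fin n → Bool) : ℕ :=
  (Finset.univ.filter fun i : Fin n => ∀ j : Fin n, j ≤ i → x j = true).card

/-- The `LeadingOnes` fitness function (real-valued). -/
def lo (n : ℕ) : (Fin n → Bool) → ℝ := fun x => leadingOnes x

/-- The all-ones bit string, the unique global optimum of `LeadingOnes`. -/
def allOnes (n : ℕ) : Fin n → Bool := fun _ => true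

open Classical in
/-- The population of `lam` individuals sampled from the frequency vector `p` by
thresholding the uniform random numbers `u`: bit `i` of individual `k` is `1` iff
`u k i < p i` (so it is `1` with probability `p i` for `p i ∈ [0,1]` and uniformly
distributed `u k i`). -/
def sample {n lam : ℕ} (p : Fin n → ℝ) (u : Fin lam → Fin n → ℝ) :
    Fin lam → Fin n → Bool :=
  fun k i => decide (u k i < p i)

/-- Individual (index) `j` beats individual `k` with respect to the fitness `f`:
it has strictly larger fitness, or equal fitness and a smaller rank in the
tie-breaking permutation `π`. -/
def Beats {n lam : ℕ} (f : (Fin n → Bool) → ℝ) (x : Fin lam → Fin n → Bool)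
    (π : Equiv.Perm (Fin lam)) (j k : Fin lam) : Prop :=
  f (x k) < f (x j) ∨ (f (x j) = f (x k) ∧ π j < π k)

open Classical in
/-- The indices of the `μ` best individuals of the population `x` with respect to `f`,
ties broken (uniformly at random) via the (uniformly random) permutation `π`:
an individual is selected iff fewer than `μ` individuals beat it. -/
def selected {n lam : ℕ} (f : (Fin n → Bool) → ℝ) (μ : ℕ)
    (x : Fin lam → Fin n → Bool) (π : Equiv.Perm (Fin lam)) : Finset (Fin lam) :=
  Finset.univ.filter fun k => (Finset.univ.filter fun j => Beats f x π j k).card < μ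

open Classical in
/-- The updated frequency vector: the relative number of ones at each position among the
`μ` selected individuals, clamped to the interval `[1/n, 1 - 1/n]`. -/
def update {n lam : ℕ} (f : (Fin n → Bool) → ℝ) (μ : ℕ)
    (x : Fin lam → Fin n → Bool) (π : Equiv.Perm (Fin lam)) : Fin n → ℝ :=
  fun i => max ((1 : ℝ) / n) (min (1 - (1 : ℝ) / n)
    (((((selected f μ x π).filter fun k => x k i = true)).card : ℝ) / (μ : ℝ)))

/-- The frequency vector `p^(t)` of the UMDA (with selection size `μ`, fitness `f`) at
the beginning of iteration `t`, as a deterministic function of the driving randomness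
`step`: `p^(0) = (1/2, …, 1/2)`, and `p^(t+1)` is obtained by sampling the population
of iteration `t` from `p^(t)`, selecting the `μ` best individuals (ties broken via the
permutation of `step t`) and taking the clamped relative numbers of ones. -/
def freq {n lam : ℕ} {Ω : Type*} (f : (Fin n → Bool) → ℝ) (μ : ℕ)
    (step : ℕ → Ω → (Fin lam → Fin n → ℝ) × Equiv.Perm (Fin lam)) :
    ℕ → Ω → Fin n → ℝ
  | 0 => fun _ _ => 1 / 2
  | t + 1 => fun ω =>
      update f μ (sample (freq f μ step t ω) (step t ω).1) (step t ω).2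

/-- The offspring population `x^(1), …, x^(lam)` sampled by the UMDA in iteration `t`. -/
def pop {n lam : ℕ} {Ω : Type*} (f : (Fin n → Bool) → ℝ) (μ : ℕ)
    (step : ℕ → Ω → (Fin lam → Fin n → ℝ) × Equiv.Perm (Fin lam))
    (t : ℕ) (ω : Ω) : Fin lam → Fin n → Bool :=
  sample (freq f μ step t ω) (step t ω).1

instance permMeasurableSpace (lam : ℕ) : MeasurableSpace (Equiv.Perm (Fin lam)) := ⊤

/-- The uniform distribution on `[0, 1] ⊆ ℝ`. -/
def unif01 : Measure ℝ := volume.restrict (Set.Icc 0 1)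

/-- The law of the fresh randomness used by the UMDA in a single iteration:
`lam · n` independent uniform random numbers in `[0,1]` together with an independent
uniformly random permutation of `Fin lam`. -/
def stepLaw (n lam : ℕ) :
    Measure ((Fin lam → Fin n → ℝ) × Equiv.Perm (Fin lam)) :=
  (Measure.pi fun _ : Fin lam => Measure.pi fun _ : Fin n => unif01).prod
    ((PMF.uniformOfFintype (Equiv.Perm (Fin lam))).toMeasure)

/-- A run of the UMDA with offspring population size `lam` on bit strings of length `n`,
carried by the probability space `Ω`: the driving randomness of the iterations is
independent, and in each iteration it has law `stepLaw n lam`. -/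
structure Model (n lam : ℕ) (Ω : Type*) [MeasureSpace Ω] where
  step : ℕ → Ω → (Fin lam → Fin n → ℝ) × Equiv.Perm (Fin lam)
  measurable_step : ∀ t, Measurable (step t)
  indep_step : iIndepFun step ℙ
  law_step : ∀ t, Measure.map (step t) ℙ = stepLaw n lam

/-- The fitness `f` weakly prefers a `1` at position `i`: flipping bit `i` from `0`
to `1` never decreases the fitness. -/
def WeaklyPrefersOne {n : ℕ} (f : (Fin n → Bool) → ℝ) (i : Fin n) : Prop :=
  ∀ x : Fin n → Bool, f (Function.update x i false) ≤ f (Function.update x i true)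

/-- Position `i : Fin n` (0-based, i.e., position `i + 1 ∈ [n]` of the paper) is
critical for the frequency vector `p`: all frequencies at smaller indices equal
`1 - 1/n` and the frequency at `i` is less than `1 - 1/n`. -/
def IsCritical {n : ℕ} (p : Fin n → ℝ) (i : Fin n) : Prop :=
  (∀ j : Fin n, j < i → p j = 1 - (1 : ℝ) / n) ∧ p i < 1 - (1 : ℝ) / n

/-- Position `i : Fin n` (0-based, i.e., position `i + 1 ∈ [n]` of the paper) is
selection-relevant (w.r.t. `LeadingOnes`) for the population `x`: at least `μ`
individuals have at least `(i + 1) - 1 = i` leading ones. -/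
def SelectionRelevant {n lam : ℕ} (μ : ℕ) (x : Fin lam → Fin n → Bool)
    (i : Fin n) : Prop :=
  μ ≤ (Finset.univ.filter fun k : Fin lam => (i : ℕ) ≤ leadingOnes (x k)).card

end UMDA
open UMDA

/-!
Let `m = min n (i + 1 + d)`. If position `i` is critical, every frequency below `i` is `1 - 1/n`
and every frequency from `i` on is at least `1/4`, so a fresh individual has its first `m` bits
all equal to one with probability `q ≥ (1 - 1/n)^i (1/4)^(d+1) ≥ e⁻¹ 4^(-d-1)`. The choice of `d`
makes `q λ ≥ μ / (1 - δ)`, so the number of such individuals, a binomial `Bin(λ, q)` variable,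
is below `μ` with probability at most `1/n²` by a Chernoff bound. Otherwise all `μ` selected
individuals have at least `m` leading ones, and every frequency below `m` is set to `1 - 1/n`.
Since the population of iteration `t` is drawn with fresh randomness, independent of `p^(t)`,
this bound holds conditionally on the event that `i` is critical.
-/

namespace UMDA

open Finset

theorem le_leadingOnes_iff {n m : ℕ} (x : Fin n → Bool) (hm : m ≤ n) :
    m ≤ leadingOnes x ↔ ∀ j : Fin n, (j : ℕ) < m → x j = true := by
  rcases m with _ | m
  · simp
  have := Fin.lt_card_filter_univ_iff_apply_of_imp (j := ⟨m, hm⟩)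
    (fun i => ∀ j ≤ i, x j = true) fun i j hji h k hk => h k (hk.trans hji)
  rw [leadingOnes, Nat.succ_le_iff]
  convert this using 1
  exact forall_congr' fun j => by rw [Fin.le_def, Nat.lt_succ_iff]

theorem card_filter_card_filter_lt_lt {ι α : Type*} [Fintype ι] [LinearOrder α] (g : ι → α)
    (hg : Function.Injective g) (μ : ℕ) :
    #{k | #{j | g j < g k} < μ} = min (Fintype.card ι) μ := by
  let _ : LinearOrder ι := LinearOrder.lift' g hg
  let e : Fin (Fintype.card ι) ≃o ι := Fintype.orderIsoFinOfCardEq ι rfl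
  have hrank : ∀ k, #{j | g j < g k} = e.symm k := by
    intro k
    rw [← min_eq_right (e.symm k).is_lt.le, ← Fin.card_filter_val_lt]
    refine card_equiv e.symm.toEquiv fun j => ?_
    simp only [mem_filter, mem_univ, true_and]
    exact e.symm.lt_iff_lt.symm
  rw [← Fin.card_filter_val_lt]
  refine card_equiv e.symm.toEquiv fun k => ?_
  simp [hrank]

theorem card_selected {n lam : ℕ} (f : (Fin n → Bool) → ℝ) (μ : ℕ)
    (x : Fin lam → Fin n → Bool) (π : Equiv.Perm (Fin lam)) (hμ : μ ≤ lam) :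
    #(selected f μ x π) = μ := by
  let key : Fin lam → Lex (ℝᵒᵈ × Fin lam) := fun k => toLex (OrderDual.toDual (f (x k)), π k)
  have hkey : Function.Injective key := fun a b h => π.injective (congrArg (fun z => (ofLex z).2) h)
  have hsel : selected f μ x π = ({k | #{j | key j < key k} < μ} : Finset (Fin lam)) := by
    unfold selected
    congr! with k j
    simp [Beats, key, Prod.Lex.lt_iff]
  rw [hsel, card_filter_card_filter_lt_lt key hkey, Fintype.card_fin, min_eq_right hμ]

theorem le_leadingOnes_of_mem_selected {n lam μ m : ℕ} {x : Fin lam → Fin n → Bool}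
    {π : Equiv.Perm (Fin lam)} (hcount : μ ≤ #{k | m ≤ leadingOnes (x k)}) {k : Fin lam}
    (hk : k ∈ selected (lo n) μ x π) : m ≤ leadingOnes (x k) := by
  classical
  by_contra! hlt
  have hbeats : #{j | m ≤ leadingOnes (x j)} ≤ #{j | Beats (lo n) x π j k} :=
    card_le_card fun j hj => by
      simp only [mem_filter, mem_univ, true_and] at hj ⊢
      exact Or.inl (by simp only [lo]; exact_mod_cast hlt.trans_le hj)
  simp only [selected, mem_filter, mem_univ, true_and] at hk
  omega

theorem update_eq_one_sub_of_forall_mem_selected {n lam μ : ℕ} (f : (Fin n → Bool) → ℝ)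
    {x : Fin lam → Fin n → Bool} {π : Equiv.Perm (Fin lam)} (hn : 2 ≤ n) (hμ0 : 0 < μ)
    (hμ : μ ≤ lam) {j : Fin n} (hall : ∀ k ∈ selected f μ x π, x k j = true) :
    update f μ x π j = 1 - 1 / n := by
  have hn' : (2 : ℝ) ≤ n := by exact_mod_cast hn
  have hμ' : (μ : ℝ) ≠ 0 := by positivity
  rw [update, filter_true_of_mem hall, card_selected f μ x π hμ, div_self hμ',
    min_eq_left (by simp), max_eq_right]
  rw [le_sub_iff_add_le, ← add_div, div_le_one (by positivity)]
  exact_mod_cast hn'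

theorem update_lo_eq_of_le_card_prefix {n lam μ m : ℕ} {x : Fin lam → Fin n → Bool}
    (π : Equiv.Perm (Fin lam)) (hn : 2 ≤ n) (hμ0 : 0 < μ) (hμ : μ ≤ lam) (hm : m ≤ n)
    (hcount : μ ≤ #{k | ∀ j : Fin n, (j : ℕ) < m → x k j = true}) {j : Fin n}
    (hj : (j : ℕ) < m) : update (lo n) μ x π j = 1 - 1 / n := by
  have hcount' : μ ≤ #{k | m ≤ leadingOnes (x k)} := by
    simpa only [le_leadingOnes_iff _ hm] using hcount
  refine update_eq_one_sub_of_forall_mem_selected _ hn hμ0 hμ fun k hk => ?_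
  exact (le_leadingOnes_iff _ hm).mp (le_leadingOnes_of_mem_selected hcount' hk) j hj

section RealBounds

open Real

theorem sub_inv_div_two_le_log {x : ℝ} (hx : 0 < x) (hx1 : x ≤ 1) : (x - x⁻¹) / 2 ≤ log x := by
  have hu : 0 ≤ -log x := neg_nonneg.mpr (log_nonpos hx.le hx1)
  have hsinh : (x - x⁻¹) / 2 = -sinh (-log x) := by
    rw [sinh_eq, neg_neg, exp_log hx, exp_neg, exp_log hx]
    ring
  linarith [self_le_sinh_iff.mpr hu]

theorem sum_range_binomial_le_exp {N μ : ℕ} {q δ : ℝ} (hq0 : 0 ≤ q) (hq1 : q ≤ 1) (hδ0 : 0 ≤ δ)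
    (hδ1 : δ < 1) (hμN : μ ≤ N) :
    ∑ j ∈ range μ, (N.choose j : ℝ) * q ^ j * (1 - q) ^ (N - j) ≤
      exp (-(q * δ * N)) / (1 - δ) ^ μ := by
  have hδ' : 0 < 1 - δ := by linarith
  have hq' : 0 ≤ 1 - q := by linarith
  -- weight the `j`-th term by `(1 - δ)^j ≥ (1 - δ)^μ`, then complete the binomial expansion
  rw [le_div_iff₀ (pow_pos hδ' μ), sum_mul]
  calc ∑ j ∈ range μ, (N.choose j : ℝ) * q ^ j * (1 - q) ^ (N - j) * (1 - δ) ^ μ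
      ≤ ∑ j ∈ range (N + 1), (q * (1 - δ)) ^ j * (1 - q) ^ (N - j) * N.choose j := by
        refine (sum_le_sum fun j hj => ?_).trans
          (sum_le_sum_of_subset_of_nonneg (range_subset_range.mpr (by omega)) fun j _ _ => ?_)
        · calc (N.choose j : ℝ) * q ^ j * (1 - q) ^ (N - j) * (1 - δ) ^ μ
              ≤ N.choose j * q ^ j * (1 - q) ^ (N - j) * (1 - δ) ^ j :=
                mul_le_mul_of_nonneg_left
                  (pow_le_pow_of_le_one hδ'.le (by linarith) (mem_range.mp hj).le) (by positivity)
            _ = (q * (1 - δ)) ^ j * (1 - q) ^ (N - j) * N.choose j := by rw [mul_pow]; ring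
        · positivity
    _ = (1 - q * δ) ^ N := by rw [← add_pow]; ring_nf
    _ ≤ exp (-(q * δ)) ^ N := by
        gcongr
        · nlinarith
        · exact one_sub_le_exp_neg _
    _ = exp (-(q * δ * N)) := by rw [← exp_nat_mul]; ring_nf

theorem sum_range_binomial_le_inv_sq {N μ : ℕ} {q δ x : ℝ} (hq0 : 0 ≤ q) (hq1 : q ≤ 1)
    (hδ : δ ∈ Set.Ioo 0 1) (hx : 0 < x) (hμN : μ ≤ N) (hqN : μ / (1 - δ) ≤ q * N)
    (hμ : 4 * ((1 - δ) / δ ^ 2) * log x ≤ μ) :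
    ∑ j ∈ range μ, (N.choose j : ℝ) * q ^ j * (1 - q) ^ (N - j) ≤ 1 / x ^ 2 := by
  obtain ⟨hδ0, hδ1⟩ := hδ
  have hδ' : 0 < 1 - δ := by linarith
  refine (sum_range_binomial_le_exp hq0 hq1 hδ0.le hδ1 hμN).trans ?_
  have hlog := sub_inv_div_two_le_log hδ' (by linarith)
  have hqδN : μ * δ / (1 - δ) ≤ q * δ * N := by
    rw [mul_div_right_comm, mul_comm q δ, mul_assoc]
    exact mul_le_mul_of_nonneg_right hqN hδ0.le |>.trans_eq (by ring)
  have hlogx : 2 * log x ≤ μ * δ ^ 2 / (2 * (1 - δ)) := by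
    have := mul_le_mul_of_nonneg_right hμ (by positivity : 0 ≤ δ ^ 2 / (2 * (1 - δ)))
    calc 2 * log x = 4 * ((1 - δ) / δ ^ 2) * log x * (δ ^ 2 / (2 * (1 - δ))) := by
          field_simp
          ring
      _ ≤ _ := this.trans_eq (by ring)
  have hexp : -(q * δ * N) - μ * log (1 - δ) ≤ -(2 * log x) := by
    have : μ * δ ^ 2 / (2 * (1 - δ)) = μ * δ / (1 - δ) + μ * ((1 - δ) - (1 - δ)⁻¹) / 2 := by
      field_simp
      ring
    nlinarith [mul_le_mul_of_nonneg_left hlog (Nat.cast_nonneg μ)]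
  calc exp (-(q * δ * N)) / (1 - δ) ^ μ = exp (-(q * δ * N) - μ * log (1 - δ)) := by
        rw [exp_sub, ← exp_log (pow_pos hδ' μ), log_pow]
    _ ≤ exp (-(2 * log x)) := exp_le_exp.mpr hexp
    _ = 1 / x ^ 2 := by rw [← log_rpow hx, exp_neg, exp_log (by positivity)]; norm_num

theorem natCast_pos_of_mul_log_le {n μ : ℕ} {δ : ℝ} (hn : 2 ≤ n) (hδ : δ ∈ Set.Ioo 0 1)
    (hμ : 4 * ((1 - δ) / δ ^ 2) * log n ≤ μ) : (0 : ℝ) < μ := by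
  have hlog : 0 < log n := log_pos (by exact_mod_cast hn)
  have hδ' : 0 < 1 - δ := by linarith [hδ.2]
  have hδ0 := hδ.1
  exact lt_of_lt_of_le (by positivity) hμ

end RealBounds

instance : IsProbabilityMeasure unif01 :=
  ⟨by simp [unif01]⟩

theorem unif01_Iio (c : ℝ) : unif01 (Set.Iio c) = ENNReal.ofReal (min c 1) := by
  rw [unif01, ← Measure.restrict_congr_set Ico_ae_eq_Icc,
    Measure.restrict_apply measurableSet_Iio, Set.inter_comm, Set.Ico_inter_Iio, Real.volume_Ico,
    sub_zero, min_comm]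

theorem pi_unif01_setOf_forall_lt {ι : Type*} [Fintype ι] (s : Finset ι) {p : ι → ℝ}
    (hp : ∀ j ∈ s, 0 ≤ p j) :
    Measure.pi (fun _ : ι => unif01) {v | ∀ j ∈ s, v j < p j} =
      ENNReal.ofReal (∏ j ∈ s, min (p j) 1) := by
  classical
  have hset : {v : ι → ℝ | ∀ j ∈ s, v j < p j} =
      Set.univ.pi fun j => if j ∈ s then Set.Iio (p j) else Set.univ := by
    ext v
    simp only [Set.mem_ofPred_eq, Set.mem_univ_pi]
    refine ⟨fun h j => ?_, fun h j hj => by simpa [hj] using h j⟩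
    split_ifs with hj
    exacts [h j hj, trivial]
  rw [hset, Measure.pi_pi, ENNReal.ofReal_prod_of_nonneg fun j hj => le_min (hp j hj) zero_le_one]
  calc ∏ j, unif01 (if j ∈ s then Set.Iio (p j) else Set.univ)
      = ∏ j, if j ∈ s then ENNReal.ofReal (min (p j) 1) else 1 :=
        prod_congr rfl fun j _ => by split_ifs with hj; exacts [unif01_Iio (p j), measure_univ]
    _ = _ := by rw [prod_ite_mem, univ_inter]

section Binomial

variable {ι α : Type*} [Fintype ι] [DecidableEq ι] {E : Set α} [DecidablePred (· ∈ E)]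

theorem setOf_filter_mem_eq_pi (S : Finset ι) :
    {u : ι → α | ({k | u k ∈ E} : Finset ι) = S} = Set.univ.pi fun k => if k ∈ S then E else Eᶜ := by
  ext u
  simp only [Set.mem_ofPred_eq, Set.mem_univ_pi, Finset.ext_iff, mem_filter, mem_univ, true_and]
  refine forall_congr' fun k => ?_
  split_ifs with hk <;> simp [hk]

variable [MeasurableSpace α] (ν : Measure α) [SigmaFinite ν]

theorem pi_setOf_filter_mem_eq (S : Finset ι) :
    Measure.pi (fun _ : ι => ν) {u | ({k | u k ∈ E} : Finset ι) = S} =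
      ν E ^ #S * ν Eᶜ ^ (Fintype.card ι - #S) := by
  rw [setOf_filter_mem_eq_pi, Measure.pi_pi]
  simp only [apply_ite ν]
  rw [prod_ite, prod_const, prod_const, ← card_compl]
  congr <;> ext <;> simp

theorem pi_setOf_card_filter_mem_lt (hE : MeasurableSet E) (μ : ℕ) :
    Measure.pi (fun _ : ι => ν) {u | #{k | u k ∈ E} < μ} =
      ∑ j ∈ range μ, (Fintype.card ι).choose j * ν E ^ j * ν Eᶜ ^ (Fintype.card ι - j) := by
  have hunion : {u : ι → α | #{k | u k ∈ E} < μ} =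
      ⋃ S ∈ ({S | #S < μ} : Finset (Finset ι)), {u | ({k | u k ∈ E} : Finset ι) = S} := by
    ext u
    simp only [Set.mem_ofPred_eq, Set.mem_iUnion, mem_filter, mem_univ, true_and, exists_prop,
      exists_eq_right']
  rw [hunion, measure_biUnion_finset]
  · simp only [pi_setOf_filter_mem_eq]
    rw [← sum_fiberwise_of_maps_to (g := Finset.card) (t := range μ) fun S hS => by simpa using hS]
    refine sum_congr rfl fun j hj => ?_
    have hfiber : ({S ∈ ({S | #S < μ} : Finset (Finset ι)) | #S = j}) = powersetCard j univ := by
      ext S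
      simp only [mem_filter, mem_univ, true_and, mem_powersetCard, subset_univ]
      exact ⟨And.right, fun h => ⟨h ▸ mem_range.mp hj, h⟩⟩
    rw [hfiber, sum_congr rfl fun S hS => by rw [(mem_powersetCard.mp hS).2], sum_const,
      card_powersetCard, card_univ, nsmul_eq_mul, mul_assoc]
  · intro S _ T _ hST
    refine Set.disjoint_left.mpr fun u hS hT => hST ?_
    exact (Set.mem_ofPred_eq.mp hS).symm.trans hT
  · intro S _
    rw [setOf_filter_mem_eq_pi]
    refine MeasurableSet.univ_pi fun k => ?_
    split_ifs
    exacts [hE, hE.compl]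

end Binomial

theorem le_pi_setOf_le_card_filter_mem {ι α : Type*} [Fintype ι] [MeasurableSpace α]
    (ν : Measure α) [IsProbabilityMeasure ν] {E : Set α} [DecidablePred (· ∈ E)]
    (hE : MeasurableSet E) {q δ x : ℝ}
    (hq0 : 0 ≤ q) (hνE : ν E = ENNReal.ofReal q) (hδ : δ ∈ Set.Ioo 0 1) (hx : 0 < x) {μ : ℕ}
    (hμN : μ ≤ Fintype.card ι) (hqN : μ / (1 - δ) ≤ q * Fintype.card ι)
    (hμ : 4 * ((1 - δ) / δ ^ 2) * Real.log x ≤ μ) :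
    ENNReal.ofReal (1 - 1 / x ^ 2) ≤ Measure.pi (fun _ : ι => ν) {u | μ ≤ #{k | u k ∈ E}} := by
  classical
  set N := Fintype.card ι
  have hq1 : q ≤ 1 := ENNReal.ofReal_le_one.mp (hνE ▸ prob_le_one)
  have hq' : 0 ≤ 1 - q := by linarith
  have hνEc : ν Eᶜ = ENNReal.ofReal (1 - q) := by
    rw [prob_compl_eq_one_sub hE, hνE, ENNReal.ofReal_sub _ hq0, ENNReal.ofReal_one]
  have hterm : ∀ j ∈ range μ, (N.choose j : ℝ≥0∞) * ν E ^ j * ν Eᶜ ^ (N - j) =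
      ENNReal.ofReal (N.choose j * q ^ j * (1 - q) ^ (N - j)) := fun j _ => by
    rw [hνE, hνEc, ENNReal.ofReal_mul (by positivity), ENNReal.ofReal_mul (by positivity),
      ENNReal.ofReal_natCast, ENNReal.ofReal_pow hq0, ENNReal.ofReal_pow hq']
  have hfew : Measure.pi (fun _ : ι => ν) {u | #{k | u k ∈ E} < μ} ≤
      ENNReal.ofReal (1 / x ^ 2) := by
    rw [pi_setOf_card_filter_mem_lt _ hE, sum_congr rfl hterm,
      ← ENNReal.ofReal_sum_of_nonneg fun j _ => by positivity]
    exact ENNReal.ofReal_le_ofReal (sum_range_binomial_le_inv_sq hq0 hq1 hδ hx hμN hqN hμ)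
  have hsplit : 1 ≤ Measure.pi (fun _ : ι => ν) {u | μ ≤ #{k | u k ∈ E}} +
      Measure.pi (fun _ : ι => ν) {u | #{k | u k ∈ E} < μ} := by
    rw [← measure_univ (μ := Measure.pi fun _ : ι => ν)]
    refine (measure_mono fun u _ => ?_).trans (measure_union_le _ _)
    exact le_or_gt μ #{k | u k ∈ E}
  rw [ENNReal.ofReal_sub _ (by positivity), ENNReal.ofReal_one, tsub_le_iff_right]
  exact hsplit.trans (add_le_add_right hfew _)

theorem le_stepLaw_update_lo_eq {n lam μ m : ℕ} {δ : ℝ} (hn : 2 ≤ n) (hδ : δ ∈ Set.Ioo 0 1)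
    (hμlam : μ ≤ lam) (hμ : 4 * ((1 - δ) / δ ^ 2) * Real.log n ≤ μ) (hm : m ≤ n) {p : Fin n → ℝ}
    (hp : ∀ j : Fin n, (j : ℕ) < m → 0 ≤ p j)
    (hq : μ / (1 - δ) ≤ (∏ j ∈ ({j | (j : ℕ) < m} : Finset (Fin n)), min (p j) 1) * lam) :
    ENNReal.ofReal (1 - 1 / (n : ℝ) ^ 2) ≤ stepLaw n lam
      {y | ∀ j : Fin n, (j : ℕ) < m → update (lo n) μ (sample p y.1) y.2 j = 1 - 1 / n} := by
  classical
  set s : Finset (Fin n) := {j | (j : ℕ) < m}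
  set E : Set (Fin n → ℝ) := {v | ∀ j ∈ s, v j < p j}
  have hps : ∀ j ∈ s, 0 ≤ p j := fun j hj => hp j (by simpa [s] using hj)
  have hE : MeasurableSet E := by
    simp only [E, Set.ofPred_forall]
    exact .biInter s.countable_toSet fun j _ =>
      measurableSet_lt (measurable_pi_apply j) measurable_const
  have hmany := le_pi_setOf_le_card_filter_mem (ι := Fin lam) _ hE
    (prod_nonneg fun j hj => le_min (hps j hj) zero_le_one) (pi_unif01_setOf_forall_lt s hps) hδ
    (by positivity) (by simpa using hμlam) (by simpa using hq) hμ
  have hμ0 : 0 < μ := by exact_mod_cast natCast_pos_of_mul_log_le hn hδ hμ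
  calc ENNReal.ofReal (1 - 1 / (n : ℝ) ^ 2)
      ≤ Measure.pi (fun _ : Fin lam => Measure.pi fun _ : Fin n => unif01)
          {u | μ ≤ #{k | u k ∈ E}} := hmany
    _ = stepLaw n lam ({u | μ ≤ #{k | u k ∈ E}} ×ˢ Set.univ) := by
      rw [stepLaw, Measure.prod_prod, measure_univ, mul_one]
    _ ≤ _ := by
      refine measure_mono ?_
      rintro ⟨u, σ⟩ ⟨hu, -⟩ j hj
      refine update_lo_eq_of_le_card_prefix σ hn hμ0 hμlam hm (hu.trans (card_le_card ?_)) hj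
      intro k
      simp [sample, E, s]

section Measurability

variable {n lam : ℕ}

instance : MeasurableSingletonClass (Equiv.Perm (Fin lam)) := ⟨fun _ => trivial⟩

theorem measurable_sample_prod :
    Measurable fun z : (Fin n → ℝ) × (Fin lam → Fin n → ℝ) × Equiv.Perm (Fin lam) =>
      (sample z.1 z.2.1, z.2.2) := by
  refine .prodMk (measurable_pi_lambda _ fun k => measurable_pi_lambda _ fun j => ?_)
    measurable_snd.snd
  refine measurable_to_bool ?_
  have : (fun z : (Fin n → ℝ) × (Fin lam → Fin n → ℝ) × Equiv.Perm (Fin lam) =>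
      sample z.1 z.2.1 k j) ⁻¹' {true} = {z | z.2.1 k j < z.1 j} := by
    ext z
    simp [sample]
  rw [this]
  exact measurableSet_lt ((measurable_pi_apply j).comp ((measurable_pi_apply k).comp
    measurable_snd.fst)) ((measurable_pi_apply j).comp measurable_fst)

theorem measurable_comp_sample_prod {β : Type*} [MeasurableSpace β]
    (F : (Fin lam → Fin n → Bool) × Equiv.Perm (Fin lam) → β) :
    Measurable fun z : (Fin n → ℝ) × (Fin lam → Fin n → ℝ) × Equiv.Perm (Fin lam) =>
      F (sample z.1 z.2.1, z.2.2) :=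
  (measurable_of_finite F).comp measurable_sample_prod

theorem measurable_update_sample (f : (Fin n → Bool) → ℝ) (μ : ℕ) :
    Measurable fun z : (Fin n → ℝ) × (Fin lam → Fin n → ℝ) × Equiv.Perm (Fin lam) =>
      update f μ (sample z.1 z.2.1) z.2.2 :=
  measurable_comp_sample_prod fun w => update f μ w.1 w.2

theorem measurableSet_setOf_update_sample_eq (f : (Fin n → Bool) → ℝ) (μ m : ℕ) (c : ℝ) :
    MeasurableSet {z : (Fin n → ℝ) × (Fin lam → Fin n → ℝ) × Equiv.Perm (Fin lam) |
      ∀ j : Fin n, (j : ℕ) < m → update f μ (sample z.1 z.2.1) z.2.2 j = c} :=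
  measurable_sample_prod (Set.toFinite {w : (Fin lam → Fin n → Bool) × Equiv.Perm (Fin lam) |
    ∀ j : Fin n, (j : ℕ) < m → update f μ w.1 w.2 j = c}).measurableSet

theorem measurable_freq_iSup_comap {Ω : Type*} [MeasurableSpace Ω]
    (f : (Fin n → Bool) → ℝ) (μ : ℕ)
    (step : ℕ → Ω → (Fin lam → Fin n → ℝ) × Equiv.Perm (Fin lam)) (t : ℕ) :
    Measurable[⨆ s ∈ Set.Iio t, MeasurableSpace.comap (step s) inferInstance]
      (freq f μ step t) := by
  induction t with
  | zero => exact measurable_const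
  | succ t ih =>
    have hmono : (⨆ s ∈ Set.Iio t, MeasurableSpace.comap (step s) inferInstance) ≤
        ⨆ s ∈ Set.Iio (t + 1), MeasurableSpace.comap (step s) inferInstance :=
      biSup_mono fun s hs => Set.mem_Iio.mpr (Nat.lt_succ_of_lt hs)
    have hstep : Measurable[⨆ s ∈ Set.Iio (t + 1), MeasurableSpace.comap (step s) inferInstance]
        (step t) :=
      (comap_measurable (step t)).mono (le_iSup₂_of_le t (Nat.lt_succ_self t) le_rfl) le_rfl
    have hfreq : freq f μ step (t + 1) = (fun z : (Fin n → ℝ) × (Fin lam → Fin n → ℝ) ×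
        Equiv.Perm (Fin lam) => update f μ (sample z.1 z.2.1) z.2.2) ∘
          fun ω => (freq f μ step t ω, step t ω) := rfl
    rw [hfreq]
    exact (measurable_update_sample f μ).comp ((ih.mono hmono le_rfl).prodMk hstep)

theorem measurable_freq {Ω : Type*} [MeasurableSpace Ω] (f : (Fin n → Bool) → ℝ) (μ : ℕ)
    {step : ℕ → Ω → (Fin lam → Fin n → ℝ) × Equiv.Perm (Fin lam)}
    (hstep : ∀ s, Measurable (step s)) (t : ℕ) : Measurable (freq f μ step t) :=
  (measurable_freq_iSup_comap f μ step t).mono (iSup₂_le fun s _ => (hstep s).comap_le) le_rfl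

theorem measurableSet_setOf_isCritical_and (i : Fin n) (c : ℝ) :
    MeasurableSet {p : Fin n → ℝ | IsCritical p i ∧ ∀ j, i ≤ j → c ≤ p j} := by
  unfold IsCritical
  measurability

end Measurability

theorem indepFun_freq_step {n lam : ℕ} {Ω : Type*} [MeasureSpace Ω] (M : Model n lam Ω)
    (f : (Fin n → Bool) → ℝ) (μ t : ℕ) : IndepFun (freq f μ M.step t) (M.step t) ℙ := by
  rw [IndepFun_iff_Indep]
  have hindep := indep_iSup_of_disjoint (fun s => (M.measurable_step s).comap_le)
    ((iIndepFun_iff_iIndep _ _ _).mp M.indep_step) (Set.disjoint_singleton_right.mpr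
      (Set.self_notMem_Iio (a := t)))
  refine indep_of_indep_of_le_right (indep_of_indep_of_le_left hindep
    (measurable_freq_iSup_comap f μ M.step t).comap_le) ?_
  exact le_iSup₂_of_le t (Set.mem_singleton t) le_rfl

theorem le_cond_of_indepFun {Ω α β : Type*} [MeasurableSpace Ω] {P : Measure Ω}
    [IsFiniteMeasure P] [MeasurableSpace α] [MeasurableSpace β] {X : Ω → α} {Y : Ω → β}
    (hX : Measurable X) (hY : Measurable Y) (hXY : IndepFun X Y P) {S : Set α}
    (hS : MeasurableSet S) {C : Set (α × β)} (hC : MeasurableSet C) {c : ℝ≥0∞}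
    (hc : ∀ a ∈ S, c ≤ P.map Y (Prod.mk a ⁻¹' C)) (hS0 : P (X ⁻¹' S) ≠ 0) :
    c ≤ P[(fun ω => (X ω, Y ω)) ⁻¹' C | X ⁻¹' S] := by
  rw [cond_apply (hX hS), ← ENNReal.mul_le_iff_le_inv hS0 (measure_ne_top _ _), mul_comm]
  have hSC : X ⁻¹' S ∩ (fun ω => (X ω, Y ω)) ⁻¹' C =
      (fun ω => (X ω, Y ω)) ⁻¹' (S ×ˢ Set.univ ∩ C) := by
    ext ω
    simp
  have hSC' : MeasurableSet (S ×ˢ Set.univ ∩ C) := (hS.prod .univ).inter hC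
  rw [hSC, ← Measure.map_apply (hX.prodMk hY) hSC',
    (indepFun_iff_map_prod_eq_prod_map_map hX.aemeasurable hY.aemeasurable).mp hXY,
    Measure.prod_apply hSC', ← Measure.map_apply hX hS, ← setLIntegral_const]
  refine (setLIntegral_mono' hS fun a ha => ?_).trans (setLIntegral_le_lintegral _ _)
  convert hc a ha using 2
  ext b
  simp [ha]

section CriticalPrefix

open Real

theorem exp_neg_one_le_one_sub_inv_pow {n k : ℕ} (hk : k < n) :
    exp (-1) ≤ (1 - 1 / n : ℝ) ^ k := by
  obtain ⟨m, rfl⟩ : ∃ m, n = m + 1 := ⟨n - 1, by omega⟩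
  have hbase : (1 - 1 / (m + 1 : ℕ) : ℝ) = m / (m + 1) := by
    push_cast
    field_simp
    ring
  have hinv : (1 - 1 / (m + 1 : ℕ) : ℝ) ^ m * (1 + (m : ℝ)⁻¹) ^ m = 1 := by
    rcases Nat.eq_zero_or_pos m with rfl | hm
    · simp
    rw [← mul_pow, hbase]
    field_simp
    simp
  have he : (1 + (m : ℝ)⁻¹) ^ m ≤ exp 1 := one_add_inv_pow_le_exp
  have hpos : 0 < (1 + (m : ℝ)⁻¹) ^ m := by positivity
  calc exp (-1) = (exp 1)⁻¹ := exp_neg 1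
    _ ≤ ((1 + (m : ℝ)⁻¹) ^ m)⁻¹ := inv_anti₀ hpos he
    _ = (1 - 1 / (m + 1 : ℕ) : ℝ) ^ m := (eq_inv_of_mul_eq_one_left hinv).symm
    _ ≤ (1 - 1 / (m + 1 : ℕ) : ℝ) ^ k := by
      rw [hbase]
      exact pow_le_pow_of_le_one (by positivity) (div_le_one_of_le₀ (by linarith) (by positivity))
        (by omega)

theorem exp_neg_one_mul_quarter_pow_le_prod_min {n m d : ℕ} {p : Fin n → ℝ} {i : Fin n}
    (hcrit : ∀ j < i, p j = 1 - 1 / n) (hquarter : ∀ j, i ≤ j → 1 / 4 ≤ p j)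
    (hm : m ≤ i + 1 + d) :
    exp (-1) * (1 / 4) ^ (d + 1) ≤ ∏ j ∈ ({j | (j : ℕ) < m} : Finset (Fin n)), min (p j) 1 := by
  set s : Finset (Fin n) := {j | (j : ℕ) < m}
  have hn : (1 : ℝ) ≤ n := by exact_mod_cast i.pos
  have hbase : 0 ≤ (1 - 1 / n : ℝ) := by rw [sub_nonneg]; exact div_le_one_of_le₀ hn (by positivity)
  have hlow : #{j ∈ s | j < i} < n := by
    calc #{j ∈ s | j < i} ≤ #(Iio i) := card_le_card fun j => by simp
      _ < n := by rw [Fin.card_Iio]; exact i.is_lt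
  have hhigh : #{j ∈ s | ¬ j < i} ≤ d + 1 := by
    calc #{j ∈ s | ¬ j < i} ≤ #(Finset.Ico (i : ℕ) (i + 1 + d)) := by
          refine card_le_card_of_injOn Fin.val (fun j hj => ?_) Fin.val_injective.injOn
          simp only [s, coe_filter, mem_filter, mem_univ, true_and, coe_Ico, not_lt,
            Fin.le_def, Set.mem_ofPred_eq, Set.mem_Ico] at hj ⊢
          exact ⟨hj.2, by omega⟩
      _ = d + 1 := by rw [Nat.card_Ico]; omega
  calc exp (-1) * (1 / 4) ^ (d + 1)
      ≤ (1 - 1 / n : ℝ) ^ #{j ∈ s | j < i} * (1 / 4 : ℝ) ^ #{j ∈ s | ¬ j < i} :=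
        mul_le_mul (exp_neg_one_le_one_sub_inv_pow hlow)
          (pow_le_pow_of_le_one (by norm_num) (by norm_num) hhigh) (by positivity)
          (pow_nonneg hbase _)
    _ = ∏ j ∈ s, if j < i then (1 - 1 / n : ℝ) else 1 / 4 := by rw [prod_ite, prod_const, prod_const]
    _ ≤ ∏ j ∈ s, min (p j) 1 := by
      refine prod_le_prod (fun j _ => by split_ifs <;> positivity) fun j _ => ?_
      split_ifs with hj
      · rw [hcrit j hj, min_eq_left (by simp)]
      · exact le_min (hquarter j (not_lt.mp hj)) (by norm_num)

theorem pow_floor_logb_le {b x : ℝ} (hb : 1 < b) (hx : 1 ≤ x) : b ^ ⌊logb b x⌋₊ ≤ x := by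
  calc b ^ ⌊logb b x⌋₊ = b ^ (⌊logb b x⌋₊ : ℝ) := (rpow_natCast b _).symm
    _ ≤ b ^ logb b x := rpow_le_rpow_of_exponent_le hb.le (Nat.floor_le (logb_nonneg hb hx))
    _ = x := rpow_logb (by linarith) hb.ne' (by linarith)

theorem div_one_sub_le_exp_neg_one_mul_quarter_pow {μ lam δ : ℝ} (hμ : 0 < μ) (hδ1 : δ < 1)
    (hlam : μ / ((1 - δ) / (4 * exp 1)) ≤ lam) :
    μ / (1 - δ) ≤
      exp (-1) * (1 / 4) ^ (⌊logb 4 ((1 - δ) / (4 * exp 1) * lam / μ)⌋₊ + 1) * lam := by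
  set d := ⌊logb 4 ((1 - δ) / (4 * exp 1) * lam / μ)⌋₊
  have hζ : 0 < (1 - δ) / (4 * exp 1) := div_pos (by linarith) (by positivity)
  have hx : 1 ≤ (1 - δ) / (4 * exp 1) * lam / μ := by
    rw [le_div_iff₀ hμ, one_mul, mul_comm]
    rwa [div_le_iff₀ hζ] at hlam
  have hd : 4 ^ d ≤ (1 - δ) / (4 * exp 1) * lam / μ := pow_floor_logb_le (by norm_num) hx
  rw [le_div_iff₀ hμ] at hd
  rw [div_le_iff₀ (by linarith), exp_neg, pow_succ]
  have h4 : (0 : ℝ) < 4 ^ d := by positivity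
  calc μ = μ * 4 ^ d / 4 ^ d := by field_simp
    _ ≤ (1 - δ) / (4 * exp 1) * lam / 4 ^ d := div_le_div_of_nonneg_right (by linarith) h4.le
    _ = (exp 1)⁻¹ * ((1 / 4) ^ d * (1 / 4)) * lam * (1 - δ) := by rw [one_div_pow]; field_simp

end CriticalPrefix

end UMDA

/-- Lemma 3.3: let `δ ∈ (0,1)` and `ζ = (1-δ)/(4e)`; consider the
UMDA optimizing LeadingOnes with `μ ≥ 4((1-δ)/δ²) ln n` and `lam ≥ μ/ζ`, and let
`d = ⌊log₄(ζ lam/μ)⌋`.  Consider an iteration `t` such that position `i` is critical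
and all frequencies at positions `≥ i` are at least `1/4` (we condition on this event
`A`, assumed to have positive probability).  Then, with (conditional) probability at
least `1 - 1/n²`, all frequencies at the (1-based) positions in `[min{n, (i+1)+d}]`
equal `1 - 1/n` after iteration `t`.  (`i : Fin n` is the 0-based index of the
1-based position `i + 1 ∈ [n]`.) -/
theorem umda_critical_frequency_jump
    (n : ℕ) (hn : 2 ≤ n) (δ : ℝ) (hδ : δ ∈ Set.Ioo (0 : ℝ) 1)
    (μ lam : ℕ) (hμlam : μ ≤ lam)
    (hμ : 4 * ((1 - δ) / δ ^ 2) * Real.log n ≤ μ)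
    (hlam : (μ : ℝ) / ((1 - δ) / (4 * Real.exp 1)) ≤ lam)
    (Ω : Type) (_ : MeasureSpace Ω) (_ : IsProbabilityMeasure (ℙ : Measure Ω))
    (M : Model n lam Ω) (t : ℕ) (i : Fin n)
    (A : Set Ω)
    (hA : A = {ω : Ω | IsCritical (freq (lo n) μ M.step t ω) i ∧
        ∀ j : Fin n, i ≤ j → (1 : ℝ) / 4 ≤ freq (lo n) μ M.step t ω j})
    (hA0 : ℙ A ≠ 0) :
    ENNReal.ofReal (1 - 1 / (n : ℝ) ^ 2) ≤
      ℙ[{ω : Ω | ∀ j : Fin n,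
          (j : ℕ) <
              min n ((i : ℕ) + 1 +
                ⌊Real.logb 4 ((1 - δ) / (4 * Real.exp 1) * lam / μ)⌋₊) →
            freq (lo n) μ M.step (t + 1) ω j = 1 - (1 : ℝ) / n} | A] := by
  subst hA
  refine le_cond_of_indepFun (measurable_freq _ μ M.measurable_step t) (M.measurable_step t)
    (indepFun_freq_step M _ μ t) (measurableSet_setOf_isCritical_and i (1 / 4))
    (measurableSet_setOf_update_sample_eq (lo n) μ _ (1 - 1 / n)) ?_ hA0
  rintro p ⟨⟨hcrit, -⟩, hquarter⟩
  rw [M.law_step t]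
  refine le_stepLaw_update_lo_eq hn hδ hμlam hμ (min_le_left _ _) (fun j _ => ?_) ?_
  · rcases lt_or_ge j i with hj | hj
    · rw [hcrit j hj, sub_nonneg]
      exact div_le_one_of_le₀ (by exact_mod_cast i.pos) (Nat.cast_nonneg n)
    · linarith [hquarter j hj]
  · exact (div_one_sub_le_exp_neg_one_mul_quarter_pow (natCast_pos_of_mul_log_le hn hδ hμ) hδ.2
      hlam).trans (mul_le_mul_of_nonneg_right (exp_neg_one_mul_quarter_pow_le_prod_min hcrit
        hquarter (min_le_right _ _)) (Nat.cast_nonneg _))
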